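/- arXiv:2510.25681 — 3 statements merged into one kernel-verified Lean document; each statement's English description precedes it below -/
import Mathlib

section
/- Let O^k_d = {ω·ℓ^{d-k} : ω homogeneous of degree k, ℓ linear form} be the affine cone over the k-th osculating variety to the degree-d Veronese variety in the space of degree-d forms in n+1 variables, with 0 ≤ k < d. At a point f = ω·ℓ^{d-k} with ℓ not dividing ω, the tangent space T_f(O^k_d) = span{θ·ℓ^{d-k} + ω·λ·ℓ^{d-k-1} : θ ∈ S_k, λ ∈ S_1} has dimension binom(k+n, k) + n, while at a point where ℓ divides ω the tangent space has dimension binom(k+n, k). Hence the singular locus of O^k_d is O^{k-1}_d. -/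
/-!
The tangent space is `A + B` with `A = S_k ℓ^{d-k}` and `B = S_1 ω ℓ^{d-k-1}`, of dimensions
`binom(k+n,k)` and `n+1`. If `ω = ℓ ω'` then `B ⊆ A`, since `ω' λ ∈ S_k`. Otherwise, as a
linear form is prime, `θ ℓ^{d-k} = λ ω ℓ^{d-k-1}` forces `ℓ ∣ λ`, so `A ∩ B` is the line
through `ω ℓ^{d-k}` and `dim (A + B) = binom(k+n,k) + n`.
-/

open MvPolynomial

namespace MvPolynomial

attribute [local instance] gradedAlgebra in
theorem homogeneousComponent_add_mul_of_isHomogeneous {σ R : Type*} [CommSemiring R]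
    {ℓ : MvPolynomial σ R} {e : ℕ} (hℓ : ℓ.IsHomogeneous e) (i : ℕ) (q : MvPolynomial σ R) :
    homogeneousComponent (e + i) (ℓ * q) = ℓ * homogeneousComponent i q := by
  have := DirectSum.coe_decompose_mul_of_left_mem_of_le (homogeneousSubmodule σ R) (b := q)
    hℓ (Nat.le_add_right e i)
  rw [Nat.add_sub_cancel_left] at this
  rw [← decomposition.decompose'_apply, ← decomposition.decompose'_apply]
  exact this

theorem IsHomogeneous.of_mul_left {σ R : Type*} [CommRing R] [IsDomain R]
    {ℓ q : MvPolynomial σ R} {e m : ℕ}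
    (h : (ℓ * q).IsHomogeneous m) (hℓ : ℓ.IsHomogeneous e) (hℓ0 : ℓ ≠ 0) :
    q.IsHomogeneous (m - e) := by
  have hcomp : ∀ i ≠ m - e, homogeneousComponent i q = 0 := fun i hi ↦ by
    have := homogeneousComponent_add_mul_of_isHomogeneous hℓ i q
    rw [homogeneousComponent_of_mem h, if_neg (by omega)] at this
    exact (mul_eq_zero.mp this.symm).resolve_left hℓ0
  intro s hs
  by_contra hdeg
  apply hs
  simpa [coeff_homogeneousComponent] using
    congrArg (coeff s) (hcomp s.degree (by rwa [Finsupp.degree_eq_weight_one]))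

variable {σ K : Type*} [Field K]

theorem IsHomogeneous.prime_of_degree_one {ℓ : MvPolynomial σ K} (hℓ : ℓ.IsHomogeneous 1)
    (hℓ0 : ℓ ≠ 0) : Prime ℓ := by
  refine UniqueFactorizationMonoid.irreducible_iff_prime.mp <|
    irreducible_of_totalDegree_eq_one (hℓ.totalDegree hℓ0) fun c hc ↦ ?_
  refine isUnit_iff_ne_zero.mpr fun hc0 ↦ hℓ0 ?_
  ext s
  simpa [hc0] using hc s

theorem finrank_homogeneousSubmodule [Fintype σ] (d : ℕ) :
    Module.finrank K (homogeneousSubmodule σ K d) = (Fintype.card σ + d - 1).choose d := by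
  classical
  have hdeg : {s : σ →₀ ℕ | s.degree = d} =
      ((Finset.univ : Finset σ).finsuppAntidiag d : Set (σ →₀ ℕ)) := by
    ext s
    simp [Finsupp.degree_eq_sum]
  rw [homogeneousSubmodule_eq_finsupp_supported, ← restrictSupport,
    Module.finrank_eq_nat_card_basis (basisRestrictSupport K _), Nat.card_coe_set_eq, hdeg,
    Set.ncard_coe_finset, Finset.card_finsuppAntidiag_nat_eq_choose, Finset.card_univ]

theorem finrank_homogeneousSubmodule_one [Fintype σ] :
    Module.finrank K (homogeneousSubmodule σ K 1) = Fintype.card σ := by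
  rw [finrank_homogeneousSubmodule, Nat.add_sub_cancel, Nat.choose_one_right]

instance {R : Type*} [CommSemiring R] [Finite σ] (d : ℕ) :
    Module.Finite R (homogeneousSubmodule σ R d) :=
  Module.Finite.iff_fg.mpr (homogeneousSubmodule_fg σ R d)

theorem finrank_map_mulRight {g : MvPolynomial σ K} (hg : g ≠ 0)
    (p : Submodule K (MvPolynomial σ K)) :
    Module.finrank K (p.map (LinearMap.mulRight K g)) = Module.finrank K p :=
  (Submodule.equivMapOfInjective _ (mul_left_injective₀ hg) p).finrank_eq.symm

/-- The tangent space `T_f O^k_d` at `f = ω ℓ^{d-k}`, written with `m = d - k - 1`. -/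
noncomputable def osculatingTangentSpace (k m : ℕ) (ω ℓ : MvPolynomial σ K) :
    Submodule K (MvPolynomial σ K) :=
  Submodule.span K {p | ∃ θ lam : MvPolynomial σ K,
    θ.IsHomogeneous k ∧ lam.IsHomogeneous 1 ∧ p = θ * ℓ ^ (m + 1) + ω * lam * ℓ ^ m}

theorem osculatingTangentSpace_eq_sup (k m : ℕ) (ω ℓ : MvPolynomial σ K) :
    osculatingTangentSpace k m ω ℓ =
      (homogeneousSubmodule σ K k).map (LinearMap.mulRight K (ℓ ^ (m + 1))) ⊔
        (homogeneousSubmodule σ K 1).map (LinearMap.mulRight K (ω * ℓ ^ m)) := by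
  apply le_antisymm
  · rw [osculatingTangentSpace, Submodule.span_le]
    rintro p ⟨θ, lam, hθ, hlam, rfl⟩
    exact Submodule.add_mem_sup ⟨θ, hθ, rfl⟩
      ⟨lam, hlam, by simp only [LinearMap.mulRight_apply]; ring⟩
  · refine sup_le ?_ ?_
    · rintro _ ⟨θ, hθ, rfl⟩
      exact Submodule.subset_span ⟨θ, 0, hθ, isHomogeneous_zero _ _ _, by simp⟩
    · rintro _ ⟨lam, hlam, rfl⟩
      exact Submodule.subset_span ⟨0, lam, isHomogeneous_zero _ _ _, hlam, by
        simp only [LinearMap.mulRight_apply]; ring⟩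

theorem map_mulRight_inf_map_mulRight_eq_span {k m : ℕ} {ω ℓ : MvPolynomial σ K}
    (hℓ : ℓ.IsHomogeneous 1) (hℓ0 : ℓ ≠ 0) (hω : ω.IsHomogeneous k) (hℓω : ¬ ℓ ∣ ω) :
    (homogeneousSubmodule σ K k).map (LinearMap.mulRight K (ℓ ^ (m + 1))) ⊓
        (homogeneousSubmodule σ K 1).map (LinearMap.mulRight K (ω * ℓ ^ m)) =
      K ∙ ω * ℓ ^ (m + 1) := by
  apply le_antisymm
  · rintro x ⟨⟨θ, -, rfl⟩, ⟨lam, hlam, hlamx⟩⟩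
    simp only [LinearMap.mulRight_apply] at hlamx ⊢
    have hθℓ : θ * ℓ = ω * lam :=
      mul_right_cancel₀ (pow_ne_zero m hℓ0) (by linear_combination -hlamx)
    obtain ⟨u, rfl⟩ := ((hℓ.prime_of_degree_one hℓ0).dvd_mul.mp
      ⟨θ, by rw [← hθℓ, mul_comm]⟩).resolve_left hℓω
    have hu : u.IsHomogeneous 0 := by simpa using hlam.of_mul_left hℓ hℓ0
    rw [← homogeneousComponent_eq_self hu, homogeneousComponent_zero] at hlamx
    exact Submodule.mem_span_singleton.mpr ⟨coeff 0 u, by rw [← hlamx, smul_eq_C_mul]; ring⟩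
  · rw [Submodule.span_singleton_le_iff_mem]
    exact ⟨⟨ω, hω, rfl⟩, ⟨ℓ, hℓ, by simp only [LinearMap.mulRight_apply]; ring⟩⟩

theorem finrank_osculatingTangentSpace_of_not_dvd [Fintype σ] {k m : ℕ}
    {ω ℓ : MvPolynomial σ K}
    (hℓ : ℓ.IsHomogeneous 1) (hℓ0 : ℓ ≠ 0) (hω : ω.IsHomogeneous k) (hω0 : ω ≠ 0)
    (hℓω : ¬ ℓ ∣ ω) :
    Module.finrank K (osculatingTangentSpace k m ω ℓ) + 1 =
      Module.finrank K (homogeneousSubmodule σ K k) + Fintype.card σ := by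
  have hsum := Submodule.finrank_sup_add_finrank_inf_eq
    ((homogeneousSubmodule σ K k).map (LinearMap.mulRight K (ℓ ^ (m + 1))))
    ((homogeneousSubmodule σ K 1).map (LinearMap.mulRight K (ω * ℓ ^ m)))
  rwa [← osculatingTangentSpace_eq_sup, map_mulRight_inf_map_mulRight_eq_span hℓ hℓ0 hω hℓω,
    finrank_span_singleton (mul_ne_zero hω0 (pow_ne_zero _ hℓ0)),
    finrank_map_mulRight (pow_ne_zero _ hℓ0),
    finrank_map_mulRight (mul_ne_zero hω0 (pow_ne_zero _ hℓ0)),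
    finrank_homogeneousSubmodule_one] at hsum

theorem osculatingTangentSpace_eq_of_dvd {k m : ℕ} {ω ℓ : MvPolynomial σ K}
    (hℓ : ℓ.IsHomogeneous 1) (hℓ0 : ℓ ≠ 0) (hω : ω.IsHomogeneous k) (hω0 : ω ≠ 0)
    (hℓω : ℓ ∣ ω) :
    osculatingTangentSpace k m ω ℓ =
      (homogeneousSubmodule σ K k).map (LinearMap.mulRight K (ℓ ^ (m + 1))) := by
  obtain ⟨ω', rfl⟩ := hℓω
  have hω' : ω'.IsHomogeneous (k - 1) := hω.of_mul_left hℓ hℓ0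
  have hk : 1 + (k - 1) = k := (hℓ.mul hω').inj_right hω hω0
  rw [osculatingTangentSpace_eq_sup, sup_eq_left]
  rintro _ ⟨lam, hlam, rfl⟩
  refine ⟨ω' * lam, by simpa [hk, add_comm] using hω'.mul hlam, ?_⟩
  simp only [LinearMap.mulRight_apply]
  ring

end MvPolynomial

theorem osculating_tangent_dim_general {K : Type*} [Field K]
    {n d k : ℕ} (hkd : k < d) (ω ℓ : MvPolynomial (Fin (n + 1)) K)
    (hω : ω.IsHomogeneous k) (hℓ : ℓ.IsHomogeneous 1) (hω0 : ω ≠ 0) (hℓ0 : ℓ ≠ 0) :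
    (¬ ℓ ∣ ω →
      Module.finrank K ↥(Submodule.span K
        {p : MvPolynomial (Fin (n + 1)) K | ∃ θ lam : MvPolynomial (Fin (n + 1)) K,
          θ.IsHomogeneous k ∧ lam.IsHomogeneous 1 ∧
            p = θ * ℓ ^ (d - k) + ω * lam * ℓ ^ (d - k - 1)})
        = (k + n).choose k + n) ∧
    (ℓ ∣ ω →
      Module.finrank K ↥(Submodule.span K
        {p : MvPolynomial (Fin (n + 1)) K | ∃ θ lam : MvPolynomial (Fin (n + 1)) K,
          θ.IsHomogeneous k ∧ lam.IsHomogeneous 1 ∧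
            p = θ * ℓ ^ (d - k) + ω * lam * ℓ ^ (d - k - 1)})
        = (k + n).choose k) := by
  obtain ⟨m, hm⟩ : ∃ m, d - k = m + 1 := ⟨d - k - 1, by omega⟩
  rw [show d - k - 1 = m by omega, hm]
  change (_ → Module.finrank K (osculatingTangentSpace k m ω ℓ) = _) ∧
    (_ → Module.finrank K (osculatingTangentSpace k m ω ℓ) = _)
  have hSk : Module.finrank K (homogeneousSubmodule (Fin (n + 1)) K k) = (k + n).choose k := by
    rw [finrank_homogeneousSubmodule, Fintype.card_fin, Nat.add_right_comm, Nat.add_sub_cancel,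
      add_comm]
  refine ⟨fun hℓω ↦ ?_, fun hℓω ↦ ?_⟩
  · have := finrank_osculatingTangentSpace_of_not_dvd (m := m) hℓ hℓ0 hω hω0 hℓω
    rw [hSk, Fintype.card_fin] at this
    omega
  · rw [osculatingTangentSpace_eq_of_dvd hℓ hℓ0 hω hω0 hℓω,
      finrank_map_mulRight (pow_ne_zero (m + 1) hℓ0), hSk]

/-- At a point `f = ω ℓ^{d-k}` of the (affine cone over the) `k`-th
osculating variety `O^k_d` of the degree-`d` Veronese variety, the tangent space
`T_f = span{θ ℓ^{d-k} + ω λ ℓ^{d-k-1} : θ ∈ S_k, λ ∈ S_1}` has dimension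
`binom(k+n,k) + n` when `ℓ ∤ ω` (smooth points), and dimension `binom(k+n,k)` when
`ℓ ∣ ω`; hence the singular locus of `O^k_d` is `O^{k-1}_d`. -/
theorem osculating_tangent_dim {K : Type*} [Field K] [IsAlgClosed K] [CharZero K]
    {n d k : ℕ} (hkd : k < d) (ω ℓ : MvPolynomial (Fin (n + 1)) K)
    (hω : ω.IsHomogeneous k) (hℓ : ℓ.IsHomogeneous 1) (hω0 : ω ≠ 0) (hℓ0 : ℓ ≠ 0) :
    (¬ ℓ ∣ ω →
      Module.finrank K ↥(Submodule.span K
        {p : MvPolynomial (Fin (n + 1)) K | ∃ θ lam : MvPolynomial (Fin (n + 1)) K,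
          θ.IsHomogeneous k ∧ lam.IsHomogeneous 1 ∧
            p = θ * ℓ ^ (d - k) + ω * lam * ℓ ^ (d - k - 1)})
        = (k + n).choose k + n) ∧
    (ℓ ∣ ω →
      Module.finrank K ↥(Submodule.span K
        {p : MvPolynomial (Fin (n + 1)) K | ∃ θ lam : MvPolynomial (Fin (n + 1)) K,
          θ.IsHomogeneous k ∧ lam.IsHomogeneous 1 ∧
            p = θ * ℓ ^ (d - k) + ω * lam * ℓ ^ (d - k - 1)})
        = (k + n).choose k) :=
  osculating_tangent_dim_general hkd ω ℓ hω hℓ hω0 hℓ0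
end

section
/- Let f = ω·ℓ^{d-k} be a homogeneous polynomial of degree d, where ω has degree k ≤ d and ℓ = x_0 + ξ_1 x_1 + ... + ξ_n x_n. Write ω = Σ_{j=0}^k ω_j ℓ^{k-j} with ω_j homogeneous of degree j in x_1,...,x_n, and set ω^{d,ℓ,x}(z) := (1/d!) Σ_{j=0}^k (d-j)! ω_j(z). Then the functional on K[x_1,...,x_n]_{≤d} given by p ↦ ⟨f, h_0(p)⟩_apolar (where h_0 is homogenization in degree d by x_0) coincides with the truncation to degree ≤ d of the polynomial-exponential functional p ↦ (ω^{d,ℓ,x}(∂_x) p)(ξ). -/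
open MvPolynomial

/-- `∂^β f`: the iterated partial derivative of `f` prescribed by the multi-index `β`. -/
noncomputable def dpow {K : Type*} [CommSemiring K] {σ : Type*} (β : σ →₀ ℕ)
    (f : MvPolynomial σ K) : MvPolynomial σ K :=
  ∑ α ∈ f.support,
    monomial (α - β) ((∏ i ∈ β.support, ((α i).descFactorial (β i) : K)) * f.coeff α)

/-- `g(∂_x)(f)`: the differential operator obtained substituting `x_i ↦ ∂/∂x_i` in `g`,
applied to `f`. -/
noncomputable def diffOp {K : Type*} [CommSemiring K] {σ : Type*}
    (g f : MvPolynomial σ K) : MvPolynomial σ K :=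
  ∑ β ∈ g.support, g.coeff β • dpow β f

/-- The apolar product `⟨f,g⟩ = (1/d!) g(∂_x)(f)` of two degree-`d` forms. -/
noncomputable def apol {K : Type*} [Field K] {σ : Type*} (d : ℕ)
    (f g : MvPolynomial σ K) : K :=
  (Nat.factorial d : K)⁻¹ * constantCoeff (diffOp g f)

/-- Degree-`d` homogenization with respect to a new variable `x_0`:
`h_0(p) = x_0^d p(x_1/x_0, …, x_n/x_0)`. -/
noncomputable def hom0 {K : Type*} [CommSemiring K] {n : ℕ} (d : ℕ)
    (p : MvPolynomial (Fin n) K) : MvPolynomial (Fin (n + 1)) K :=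
  ∑ β ∈ p.support,
    monomial (Finsupp.mapDomain Fin.succ β + Finsupp.single 0 (d - β.sum fun _ e => e))
      (p.coeff β)

/-! Both sides are linear in the decomposition `ω = ∑ ω_j ℓ^{k-j}`, so it suffices to treat one
piece `f = ω_j ℓ^{d-j}` and, inside it, one monomial `x^β` of `ω_j` (so `|β| = j`). Pairing `f`
with `h_0(x^α)` reads off `(h_0 α)! · coeff_{h_0 α}(x^β ℓ^{d-j})`, where `h_0 α = (d - |α|, α)`.
Removing the factor `x^β` turns `(h_0 α)!` into `(h_0 α - β)! · ∏ α_i! / (α_i - β_i)!`, and the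
multinomial theorem gives `δ! · coeff_δ(ℓ^m) = m! · ξ^δ` whenever `|δ| = m`. The result
`(d-j)! · ∏ α_i! / (α_i - β_i)! · ξ^{α-β}` is `(d-j)!` times `(∂^β x^α)(ξ)`. -/

section DiffOp

variable {K σ : Type*} [CommSemiring K]

theorem coeff_dpow (β γ : σ →₀ ℕ) (f : MvPolynomial σ K) :
    coeff γ (dpow β f) =
      (∏ i ∈ β.support, (((γ + β) i).descFactorial (β i) : K)) * f.coeff (γ + β) := by
  classical
  rw [dpow, coeff_sum, Finset.sum_eq_single (γ + β)]
  · rw [coeff_monomial, add_tsub_cancel_right, if_pos rfl]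
  · intro α _ hne
    rw [coeff_monomial]
    split_ifs with h
    · obtain ⟨i, hi⟩ : ∃ i, α i < β i := by
        by_contra! hc
        exact hne (by rw [← h, tsub_add_cancel_of_le (Finsupp.le_def.mpr hc)])
      rw [Finset.prod_eq_zero (i := i) (Finsupp.mem_support_iff.mpr (by omega))
        (by rw [Nat.descFactorial_eq_zero_iff_lt.mpr hi, Nat.cast_zero]), zero_mul]
    · rfl
  · intro h
    simp [notMem_support_iff.mp h]

theorem constantCoeff_diffOp (g f : MvPolynomial σ K) :
    constantCoeff (diffOp g f) =
      ∑ γ ∈ g.support, g.coeff γ * ((∏ i ∈ γ.support, ((γ i).factorial : K)) * f.coeff γ) := by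
  rw [constantCoeff_eq, diffOp, coeff_sum]
  refine Finset.sum_congr rfl fun γ _ => ?_
  simp only [coeff_smul, coeff_dpow, zero_add, smul_eq_mul, Nat.descFactorial_self]

theorem diffOp_eq_sum_of_support_subset {g : MvPolynomial σ K} {S : Finset (σ →₀ ℕ)}
    (hS : g.support ⊆ S) (f : MvPolynomial σ K) :
    diffOp g f = ∑ β ∈ S, g.coeff β • dpow β f :=
  Finset.sum_subset hS fun β _ hβ => by rw [notMem_support_iff.mp hβ, zero_smul]

theorem diffOp_add_left (g h f : MvPolynomial σ K) :
    diffOp (g + h) f = diffOp g f + diffOp h f := by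
  classical
  rw [diffOp_eq_sum_of_support_subset support_add f,
    diffOp_eq_sum_of_support_subset Finset.subset_union_left f,
    diffOp_eq_sum_of_support_subset Finset.subset_union_right f, ← Finset.sum_add_distrib]
  simp only [coeff_add, add_smul]

theorem diffOp_zero_left (f : MvPolynomial σ K) : diffOp 0 f = 0 := by
  simp [diffOp]

theorem diffOp_sum_left {ι : Type*} (s : Finset ι) (g : ι → MvPolynomial σ K)
    (f : MvPolynomial σ K) : diffOp (∑ j ∈ s, g j) f = ∑ j ∈ s, diffOp (g j) f := by
  induction s using Finset.cons_induction with
  | empty => exact diffOp_zero_left f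
  | cons j s hj ih => rw [Finset.sum_cons, Finset.sum_cons, diffOp_add_left, ih]

theorem diffOp_smul_left (c : K) (g f : MvPolynomial σ K) :
    diffOp (c • g) f = c • diffOp g f := by
  rw [diffOp_eq_sum_of_support_subset (support_smul (a := c)) f, diffOp, Finset.smul_sum]
  simp only [coeff_smul, smul_eq_mul, mul_smul]

theorem eval_dpow [Fintype σ] (ξ : σ → K) (β : σ →₀ ℕ) (f : MvPolynomial σ K) :
    eval ξ (dpow β f) = ∑ α ∈ f.support,
      (∏ i, ((α i).descFactorial (β i) : K)) * f.coeff α * ∏ i, ξ i ^ (α - β) i := by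
  rw [dpow, map_sum]
  refine Finset.sum_congr rfl fun α _ => ?_
  rw [eval_monomial, Finsupp.prod_fintype _ _ fun i => pow_zero _]
  congr 2
  exact Finset.prod_subset (Finset.subset_univ _) fun i _ h => by
    rw [Finsupp.notMem_support_iff.mp h, Nat.descFactorial_zero, Nat.cast_one]

end DiffOp

theorem apol_sum_left {K σ ι : Type*} [Field K] (d : ℕ) (s : Finset ι)
    (f : ι → MvPolynomial σ K) (g : MvPolynomial σ K) :
    apol d (∑ j ∈ s, f j) g = ∑ j ∈ s, apol d (f j) g := by
  simp only [apol, constantCoeff_diffOp, coeff_sum, Finset.mul_sum]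
  exact Finset.sum_comm

section Coefficients

variable {K σ : Type*} [CommSemiring K] [Fintype σ]

theorem prod_factorial_mul_coeff_sum_smul_X_pow (c : σ → K) (δ : σ →₀ ℕ) (m : ℕ) :
    (∏ i, ((δ i).factorial : K)) * coeff δ ((∑ i, c i • X i) ^ m) =
      if δ.degree = m then (m.factorial : K) * ∏ i, c i ^ δ i else 0 := by
  rw [coeff_linearCombination_X_pow_of_fintype, show (δ.sum fun _ k => k) = δ.degree from rfl]
  split_ifs with hδ
  · have hspec := Nat.multinomial_spec Finset.univ δ
    rw [← Finsupp.degree_eq_sum, hδ] at hspec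
    rw [Finsupp.multinomial_eq_of_support_subset (Finset.subset_univ _),
      Finsupp.prod_fintype _ _ fun i => pow_zero _, ← mul_assoc, ← Nat.cast_prod,
      ← Nat.cast_mul, hspec]
  · rw [mul_zero]

theorem prod_factorial_mul_coeff_monomial_one_mul (β δ : σ →₀ ℕ) (q : MvPolynomial σ K) :
    (∏ i, ((δ i).factorial : K)) * coeff δ (monomial β 1 * q) =
      (∏ i, ((δ i).descFactorial (β i) : K)) *
        ((∏ i, (((δ - β) i).factorial : K)) * coeff (δ - β) q) := by
  rw [coeff_monomial_mul']
  split_ifs with hβδ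
  · rw [one_mul, ← mul_assoc, ← Finset.prod_mul_distrib]
    congr 1
    refine Finset.prod_congr rfl fun i _ => ?_
    rw [Finsupp.tsub_apply, ← Nat.cast_mul, mul_comm,
      Nat.factorial_mul_descFactorial (Finsupp.le_def.mp hβδ i)]
  · obtain ⟨i, hi⟩ : ∃ i, δ i < β i := by
      by_contra! hc
      exact hβδ (Finsupp.le_def.mpr hc)
    rw [mul_zero, Finset.prod_eq_zero (Finset.mem_univ i)
      (by rw [Nat.descFactorial_eq_zero_iff_lt.mpr hi, Nat.cast_zero]), zero_mul]

end Coefficients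

namespace Finsupp

variable {n : ℕ}

theorem mapDomain_succ_add_single_zero (a : ℕ) (α : Fin n →₀ ℕ) :
    mapDomain Fin.succ α + single 0 a = cons a α := by
  ext i
  cases i using Fin.cases with
  | zero => simp [mapDomain_of_notMem_range]
  | succ i => simp [mapDomain_apply (Fin.succ_injective n), Fin.succ_ne_zero]

theorem cons_tsub_cons (a b : ℕ) (α β : Fin n →₀ ℕ) :
    cons a α - cons b β = cons (a - b) (α - β) := by
  ext i
  cases i using Fin.cases <;> simp

theorem degree_cons (a : ℕ) (α : Fin n →₀ ℕ) : (cons a α).degree = a + α.degree := by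
  simp [degree_eq_sum, Fin.sum_univ_succ]

end Finsupp

section Homogenization

variable {K : Type*} {n : ℕ}

/-- The exponent of `h_0(x^α)` in degree `d`. -/
noncomputable def hom0Exponent (d : ℕ) (α : Fin n →₀ ℕ) : Fin (n + 1) →₀ ℕ :=
  Finsupp.cons (d - α.degree) α

theorem hom0Exponent_injective (d : ℕ) : Function.Injective (hom0Exponent (n := n) d) :=
  fun α β h => by simpa [hom0Exponent] using congr_arg Finsupp.tail h

variable [CommSemiring K]

theorem hom0_eq_sum (d : ℕ) (p : MvPolynomial (Fin n) K) :
    hom0 d p = ∑ α ∈ p.support, monomial (hom0Exponent d α) (p.coeff α) := by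
  simp only [hom0, hom0Exponent, Finsupp.mapDomain_succ_add_single_zero]
  rfl

theorem coeff_hom0Exponent_hom0 (d : ℕ) (p : MvPolynomial (Fin n) K) (α : Fin n →₀ ℕ) :
    coeff (hom0Exponent d α) (hom0 d p) = p.coeff α := by
  classical
  rw [hom0_eq_sum, coeff_sum, Finset.sum_eq_single α]
  · rw [coeff_monomial, if_pos rfl]
  · intro β _ hne
    rw [coeff_monomial, if_neg fun h => hne (hom0Exponent_injective d h)]
  · intro h
    rw [notMem_support_iff.mp h, coeff_monomial, if_pos rfl]

theorem support_hom0_subset (d : ℕ) (p : MvPolynomial (Fin n) K) :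
    (hom0 d p).support ⊆ p.support.image (hom0Exponent d) := by
  classical
  rw [hom0_eq_sum]
  refine support_sum.trans (Finset.biUnion_subset.mpr fun α hα => ?_)
  exact (support_monomial_subset).trans
    (Finset.singleton_subset_iff.mpr (Finset.mem_image_of_mem _ hα))

end Homogenization

theorem apol_hom0 {K : Type*} [Field K] {n : ℕ} (d : ℕ) (f : MvPolynomial (Fin (n + 1)) K)
    (p : MvPolynomial (Fin n) K) :
    apol d f (hom0 d p) = (d.factorial : K)⁻¹ * ∑ α ∈ p.support, p.coeff α *
      ((∏ i, ((hom0Exponent d α i).factorial : K)) * coeff (hom0Exponent d α) f) := by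
  rw [apol, constantCoeff_diffOp, Finset.sum_subset (support_hom0_subset d p)
      fun γ _ hγ => by rw [notMem_support_iff.mp hγ, zero_mul],
    Finset.sum_image fun α _ β _ h => hom0Exponent_injective d h]
  congr 1
  refine Finset.sum_congr rfl fun α _ => ?_
  rw [coeff_hom0Exponent_hom0, Finset.prod_subset (Finset.subset_univ _) fun i _ hi => by
    rw [Finsupp.notMem_support_iff.mp hi, Nat.factorial_zero, Nat.cast_one]]

section LinearForm

variable {K : Type*} [CommSemiring K] {n : ℕ} (ξ : Fin n → K)

theorem X_zero_add_sum_C_mul_X_succ :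
    (X 0 + ∑ i, C (ξ i) * X i.succ : MvPolynomial (Fin (n + 1)) K) =
      ∑ i, (Fin.cons 1 ξ : Fin (n + 1) → K) i • X i := by
  simp [Fin.sum_univ_succ, smul_eq_C_mul]

theorem prod_factorial_mul_coeff_hom0Exponent_monomial_mul_pow {d : ℕ} {α : Fin n →₀ ℕ}
    (hα : α.degree ≤ d) (β : Fin n →₀ ℕ) :
    (∏ i, ((hom0Exponent d α i).factorial : K)) *
        coeff (hom0Exponent d α) (monomial (Finsupp.cons 0 β) 1 *
          (X 0 + ∑ i, C (ξ i) * X i.succ) ^ (d - β.degree)) =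
      ((d - β.degree).factorial : K) *
        ((∏ i, ((α i).descFactorial (β i) : K)) * ∏ i, ξ i ^ (α - β) i) := by
  rw [prod_factorial_mul_coeff_monomial_one_mul, X_zero_add_sum_C_mul_X_succ,
    prod_factorial_mul_coeff_sum_smul_X_pow, hom0Exponent, Finsupp.cons_tsub_cons, tsub_zero]
  simp only [Fin.prod_univ_succ, Finsupp.cons_zero, Finsupp.cons_succ, Fin.cons_zero,
    Fin.cons_succ, Nat.descFactorial_zero, Nat.cast_one, one_pow, one_mul]
  by_cases hβα : β ≤ α
  · have hdeg : (Finsupp.cons (d - α.degree) (α - β)).degree = d - β.degree := by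
      have := congr_arg Finsupp.degree (tsub_add_cancel_of_le hβα)
      rw [map_add] at this
      rw [Finsupp.degree_cons]
      omega
    rw [if_pos hdeg]
    ring
  · obtain ⟨i, hi⟩ : ∃ i, α i < β i := by
      by_contra! hc
      exact hβα (Finsupp.le_def.mpr hc)
    rw [Finset.prod_eq_zero (Finset.mem_univ i)
      (by rw [Nat.descFactorial_eq_zero_iff_lt.mpr hi, Nat.cast_zero])]
    simp

end LinearForm

theorem apol_rename_mul_pow_hom0 {K : Type*} [Field K] {n d j : ℕ} (ξ : Fin n → K)
    {g : MvPolynomial (Fin n) K} (hg : g.IsHomogeneous j) {p : MvPolynomial (Fin n) K}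
    (hp : p.totalDegree ≤ d) :
    apol d (rename Fin.succ g * (X 0 + ∑ i, C (ξ i) * X i.succ) ^ (d - j)) (hom0 d p) =
      (d.factorial : K)⁻¹ * ((d - j).factorial * eval ξ (diffOp g p)) := by
  set ℓ : MvPolynomial (Fin (n + 1)) K := X 0 + ∑ i, C (ξ i) * X i.succ
  have hcoeff : ∀ γ, coeff γ (rename Fin.succ g * ℓ ^ (d - j)) =
      ∑ β ∈ g.support, g.coeff β * coeff γ (monomial (Finsupp.cons 0 β) 1 * ℓ ^ (d - j)) := by
    intro γ
    conv_lhs => rw [g.as_sum, map_sum, Finset.sum_mul, coeff_sum]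
    refine Finset.sum_congr rfl fun β _ => ?_
    rw [rename_monomial, ← Finsupp.mapDomain_succ_add_single_zero, Finsupp.single_zero,
      add_zero, ← mul_one (g.coeff β), ← C_mul_monomial, mul_assoc, coeff_C_mul, mul_one]
  rw [apol_hom0, diffOp, map_sum]
  congr 1
  simp only [hcoeff, smul_eval, eval_dpow, Finset.mul_sum]
  rw [Finset.sum_comm]
  refine Finset.sum_congr rfl fun β hβ => Finset.sum_congr rfl fun α hα => ?_
  have hβj : β.degree = j := by
    by_contra h
    exact mem_support_iff.mp hβ (hg.coeff_eq_zero h)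
  have hαd : α.degree ≤ d := (le_totalDegree hα).trans hp
  have key := prod_factorial_mul_coeff_hom0Exponent_monomial_mul_pow ξ hαd β
  rw [hβj] at key
  linear_combination (p.coeff α * g.coeff β) * key

theorem apolar_homog_eq_polyExp_general {K : Type*} [Field K] {n d k : ℕ}
    (hkd : k ≤ d) (ξ : Fin n → K) (ω : MvPolynomial (Fin (n + 1)) K)
    (ωj : ℕ → MvPolynomial (Fin n) K)
    (hωj : ∀ j, (ωj j).IsHomogeneous j)
    (hdec : ω = ∑ j ∈ Finset.range (k + 1),
      rename Fin.succ (ωj j) * (X 0 + ∑ i, C (ξ i) * X (Fin.succ i)) ^ (k - j)) :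
    ∀ p : MvPolynomial (Fin n) K, p.totalDegree ≤ d →
      apol d (ω * (X 0 + ∑ i, C (ξ i) * X (Fin.succ i)) ^ (d - k)) (hom0 d p)
        = eval ξ (diffOp ((Nat.factorial d : K)⁻¹ •
            ∑ j ∈ Finset.range (k + 1), (Nat.factorial (d - j) : K) • ωj j) p) := by
  intro p hp
  set ℓ : MvPolynomial (Fin (n + 1)) K := X 0 + ∑ i, C (ξ i) * X i.succ
  have hf : ω * ℓ ^ (d - k) =
      ∑ j ∈ Finset.range (k + 1), rename Fin.succ (ωj j) * ℓ ^ (d - j) := by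
    rw [hdec, Finset.sum_mul]
    refine Finset.sum_congr rfl fun j hj => ?_
    rw [mul_assoc, ← pow_add, add_comm (k - j),
      tsub_add_tsub_cancel hkd (Nat.lt_succ_iff.mp (Finset.mem_range.mp hj))]
  rw [hf, apol_sum_left, diffOp_smul_left, diffOp_sum_left, smul_eval, map_sum, Finset.mul_sum]
  refine Finset.sum_congr rfl fun j _ => ?_
  rw [apol_rename_mul_pow_hom0 ξ (hωj j) hp, diffOp_smul_left, smul_eval]

/-- For `f = ω ℓ^{d-k}` with `ℓ = x_0 + ξ_1 x_1 + ⋯ + ξ_n x_n`, writing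
`ω = ∑_{j=0}^k ω_j ℓ^{k-j}` with `ω_j` homogeneous of degree `j` in `x_1,…,x_n` and setting
`ω^{d,ℓ,x} = (1/d!) ∑_j (d-j)! ω_j`, the functional `p ↦ ⟨f, h_0(p)⟩` on polynomials of
degree `≤ d` coincides with the (truncated) polynomial-exponential functional
`p ↦ (ω^{d,ℓ,x}(∂_x) p)(ξ)`. -/
theorem apolar_homog_eq_polyExp {K : Type*} [Field K] [CharZero K] {n d k : ℕ}
    (hkd : k ≤ d) (ξ : Fin n → K) (ω : MvPolynomial (Fin (n + 1)) K)
    (hω : ω.IsHomogeneous k) (ωj : ℕ → MvPolynomial (Fin n) K)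
    (hωj : ∀ j, (ωj j).IsHomogeneous j)
    (hdec : ω = ∑ j ∈ Finset.range (k + 1),
      rename Fin.succ (ωj j) * (X 0 + ∑ i, C (ξ i) * X (Fin.succ i)) ^ (k - j)) :
    ∀ p : MvPolynomial (Fin n) K, p.totalDegree ≤ d →
      apol d (ω * (X 0 + ∑ i, C (ξ i) * X (Fin.succ i)) ^ (d - k)) (hom0 d p)
        = eval ξ (diffOp ((Nat.factorial d : K)⁻¹ •
            ∑ j ∈ Finset.range (k + 1), (Nat.factorial (d - j) : K) • ωj j) p) :=
  apolar_homog_eq_polyExp_general hkd ξ ω ωj hωj hdec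
end

section
/- Let I ⊆ S = K[x_0,...,x_n] be a homogeneous ideal with graded quotient A = S/I, let d ≥ reg(A) (the Castelnuovo–Mumford regularity), v ∈ S_1, and suppose the multiplication map A_d → A_{d+1}, a ↦ a·v, is bijective. If B is a (vector space) basis of A_d, then the dehomogenization of B at v = 1 is a basis of the localization S/(I, v-1). -/
/-!
Put `J = I + (v - 1)`, so that `v ≡ 1` modulo `J`. Multiplying by `v ^ d` and then lowering the
degree with the surjectivity of multiplication by `v` shows that every form is congruent modulo `J`
to a form of degree `d`, so `B` spans `S/J`. For independence, a form `w` of degree `d` lying in `J`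
lies in `I`: writing `w = i + g (v - 1)` with `i ∈ I` and comparing homogeneous components modulo
the homogeneous ideal `I` gives `g₀ ≡ 0` (if `d ≠ 0`) and `g_{k+1} ≡ v g_k` for `k + 1 ≠ d`. Going
up from degree `0` kills the components of degree `< d`; going down from the top degree, the
injectivity of multiplication by `v` kills those of degree `≥ d`. Hence `g ∈ I` and so `w ∈ I`.
-/

open MvPolynomial

theorem eq_zero_of_succ_eq_mul {A : Type*} [MulZeroClass A] {a : A} {G : ℕ → A} {d N : ℕ}
    (hzero : d ≠ 0 → G 0 = 0) (hsucc : ∀ k, k + 1 ≠ d → G (k + 1) = a * G k)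
    (hlarge : ∀ k, N ≤ k → G k = 0) (hcancel : ∀ k, d ≤ k → a * G k = 0 → G k = 0) (k : ℕ) :
    G k = 0 := by
  rcases lt_or_ge k d with hk | hk
  · induction k with
    | zero => exact hzero (by omega)
    | succ k ih => rw [hsucc k (by omega), ih (by omega), mul_zero]
  · refine Nat.decreasingInduction' (fun j _ hkj ih ↦ ?_) (le_max_left k N)
      (hlarge _ (le_max_right k N))
    exact hcancel j (hk.trans hkj) (by rw [← hsucc j (by omega), ih])

namespace MvPolynomial

variable {σ R : Type*} [CommRing R]

section
attribute [local instance] MvPolynomial.gradedAlgebra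

theorem IsHomogeneous.homogeneousComponent_mul_left {φ : MvPolynomial σ R} {i : ℕ}
    (hφ : φ.IsHomogeneous i) (ψ : MvPolynomial σ R) (n : ℕ) :
    homogeneousComponent n (φ * ψ) = if i ≤ n then φ * homogeneousComponent (n - i) ψ else 0 := by
  simp only [← decomposition.decompose'_apply]
  exact DirectSum.coe_decompose_mul_of_left_mem _ n ((mem_homogeneousSubmodule i φ).2 hφ)

end

theorem mem_of_forall_homogeneousComponent_mem {I : Ideal (MvPolynomial σ R)}
    {p : MvPolynomial σ R} (h : ∀ n, homogeneousComponent n p ∈ I) : p ∈ I :=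
  sum_homogeneousComponent p ▸ I.sum_mem fun n _ ↦ h n

theorem mem_of_isHomogeneous_of_mem_sup_span_sub_one {I : Ideal (MvPolynomial σ R)}
    (hI : ∀ p ∈ I, ∀ n, homogeneousComponent n p ∈ I) {v : MvPolynomial σ R}
    (hv : v.IsHomogeneous 1) {d : ℕ}
    (hinj : ∀ e, d ≤ e → ∀ p : MvPolynomial σ R, p.IsHomogeneous e → v * p ∈ I → p ∈ I)
    {w : MvPolynomial σ R} (hw : w.IsHomogeneous d) (hwJ : w ∈ I ⊔ Ideal.span {v - 1}) :
    w ∈ I := by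
  obtain ⟨i, hi, _, hz, hiw⟩ := Submodule.mem_sup.1 hwJ
  obtain ⟨g, rfl⟩ := Ideal.mem_span_singleton'.1 hz
  suffices hg : g ∈ I by rw [← hiw]; exact I.add_mem hi (I.mul_mem_right _ hg)
  set π := Ideal.Quotient.mk I
  have hi' : w + g - v * g ∈ I := by rw [← hiw]; convert hi using 1; ring
  have hrel (k : ℕ) : π (homogeneousComponent k w) + π (homogeneousComponent k g) =
      π (homogeneousComponent k (v * g)) := by
    rw [← sub_eq_zero, ← map_add, ← map_sub, Ideal.Quotient.eq_zero_iff_mem, ← map_add, ← map_sub]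
    exact hI _ hi' k
  have hw_comp (k : ℕ) (hk : k ≠ d) : homogeneousComponent k w = 0 := by
    rw [homogeneousComponent_of_mem ((mem_homogeneousSubmodule d w).2 hw), if_neg hk]
  refine mem_of_forall_homogeneousComponent_mem fun k ↦ Ideal.Quotient.eq_zero_iff_mem.1 ?_
  refine eq_zero_of_succ_eq_mul (G := fun k ↦ π (homogeneousComponent k g)) (a := π v)
    (d := d) (N := g.totalDegree + 1) (fun hd ↦ ?_)
    (fun k hk ↦ ?_) (fun k hk ↦ ?_) (fun k hk hvk ↦ ?_) k
  · simpa [hw_comp 0 hd.symm, hv.homogeneousComponent_mul_left] using hrel 0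
  · simpa [hw_comp _ hk, hv.homogeneousComponent_mul_left] using hrel (k + 1)
  · rw [homogeneousComponent_eq_zero _ _ (by omega), map_zero]
  · rw [← map_mul, Ideal.Quotient.eq_zero_iff_mem] at hvk
    rw [Ideal.Quotient.eq_zero_iff_mem]
    exact hinj k hk _ (homogeneousComponent_isHomogeneous k g) hvk

theorem map_mkₐ_homogeneousSubmodule_eq_top {J : Ideal (MvPolynomial σ R)} {v : MvPolynomial σ R}
    (hv : v.IsHomogeneous 1) (hvJ : v - 1 ∈ J) {d : ℕ}
    (hsurj : ∀ e, d ≤ e → ∀ q : MvPolynomial σ R, q.IsHomogeneous (e + 1) →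
      ∃ p : MvPolynomial σ R, p.IsHomogeneous e ∧ q - v * p ∈ J) :
    Submodule.map (Ideal.Quotient.mkₐ R J).toLinearMap (homogeneousSubmodule σ R d) = ⊤ := by
  set M := Submodule.map (Ideal.Quotient.mkₐ R J).toLinearMap (homogeneousSubmodule σ R d)
  have hv_one : Ideal.Quotient.mk J v = 1 := by
    rw [← map_one (Ideal.Quotient.mk J), Ideal.Quotient.eq]; exact hvJ
  have of_le (e : ℕ) (he : d ≤ e) (q : MvPolynomial σ R) (hq : q.IsHomogeneous e) :
      Ideal.Quotient.mk J q ∈ M := by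
    induction e, he using Nat.le_induction generalizing q with
    | base => exact ⟨q, hq, rfl⟩
    | succ e he ih =>
      obtain ⟨p, hp, hqp⟩ := hsurj e he q hq
      rw [Ideal.Quotient.eq.2 hqp, map_mul, hv_one, one_mul]
      exact ih p hp
  -- Multiplying by `v ^ d ≡ 1` lifts every form to degree at least `d`.
  have any_degree (e : ℕ) (q : MvPolynomial σ R) (hq : q.IsHomogeneous e) :
      Ideal.Quotient.mk J q ∈ M := by
    have := of_le (d + e) (by omega) _ (by simpa using (hv.pow d).mul hq)
    rwa [map_mul, map_pow, hv_one, one_pow, one_mul] at this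
  refine Submodule.eq_top_iff'.2 fun x ↦ ?_
  obtain ⟨p, rfl⟩ := Ideal.Quotient.mk_surjective x
  rw [← sum_homogeneousComponent p, map_sum]
  exact M.sum_mem fun k _ ↦ any_degree k _ (homogeneousComponent_isHomogeneous k p)

theorem disjoint_map_homogeneousSubmodule_ker_factorₐ {I : Ideal (MvPolynomial σ R)}
    (hI : ∀ p ∈ I, ∀ n, homogeneousComponent n p ∈ I) {v : MvPolynomial σ R}
    (hv : v.IsHomogeneous 1) {d : ℕ}
    (hinj : ∀ e, d ≤ e → ∀ p : MvPolynomial σ R, p.IsHomogeneous e → v * p ∈ I → p ∈ I) :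
    Disjoint (Submodule.map (Ideal.Quotient.mkₐ R I).toLinearMap (homogeneousSubmodule σ R d))
      (LinearMap.ker (Ideal.Quotient.factorₐ R
        (le_sup_left : I ≤ I ⊔ Ideal.span {v - 1})).toLinearMap) := by
  rw [Submodule.disjoint_def]
  rintro _ ⟨w, hw, rfl⟩ hker
  exact Ideal.Quotient.eq_zero_iff_mem.2 <| mem_of_isHomogeneous_of_mem_sup_span_sub_one hI hv
    hinj hw (Ideal.Quotient.eq_zero_iff_mem.1 hker)

end MvPolynomial

theorem basis_of_localization_general {K : Type*} [Field K] {m : ℕ} (d : ℕ)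
    (I : Ideal (MvPolynomial (Fin m) K))
    (hIhom : ∀ p ∈ I, ∀ i : ℕ, (homogeneousComponent i) p ∈ I)
    (v : MvPolynomial (Fin m) K) (hv : v.IsHomogeneous 1)
    (hinj : ∀ e : ℕ, d ≤ e → ∀ p : MvPolynomial (Fin m) K,
      p.IsHomogeneous e → v * p ∈ I → p ∈ I)
    (hsurj : ∀ e : ℕ, d ≤ e → ∀ q : MvPolynomial (Fin m) K, q.IsHomogeneous (e + 1) →
      ∃ p : MvPolynomial (Fin m) K, p.IsHomogeneous e ∧ q - v * p ∈ I)
    (B : Set (MvPolynomial (Fin m) K))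
    (hBli : LinearIndependent K (fun b : B => Ideal.Quotient.mk I (b : MvPolynomial (Fin m) K)))
    (hBspan : Submodule.span K ((Ideal.Quotient.mk I) '' B)
      = Submodule.map (Ideal.Quotient.mkₐ K I).toLinearMap
          (homogeneousSubmodule (Fin m) K d)) :
    LinearIndependent K
        (fun b : B => Ideal.Quotient.mk (I ⊔ Ideal.span {v - 1}) (b : MvPolynomial (Fin m) K)) ∧
      Submodule.span K ((Ideal.Quotient.mk (I ⊔ Ideal.span {v - 1})) '' B) = ⊤ := by
  set J := I ⊔ Ideal.span {v - 1}
  have hIJ : I ≤ J := le_sup_left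
  let f := (Ideal.Quotient.factorₐ K hIJ).toLinearMap
  have hspan : Submodule.span K (Ideal.Quotient.mk J '' B) =
      Submodule.map (Ideal.Quotient.mkₐ K J).toLinearMap (homogeneousSubmodule (Fin m) K d) := by
    rw [show Ideal.Quotient.mk J '' B = f '' (Ideal.Quotient.mk I '' B) from
      (Set.image_image f (Ideal.Quotient.mk I) B).symm, Submodule.span_image, hBspan,
      ← Submodule.map_comp]
    rfl
  refine ⟨hBli.map (f := f) ?_, hspan.trans ?_⟩
  · rw [← Set.image_eq_range, hBspan]
    exact disjoint_map_homogeneousSubmodule_ker_factorₐ hIhom hv hinj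
  · exact map_mkₐ_homogeneousSubmodule_eq_top hv
      (Ideal.mem_sup_right (Ideal.mem_span_singleton_self _))
      fun e he q hq ↦ (hsurj e he q hq).imp fun _ ↦ And.imp_right (hIJ ·)

/-- Let `I ⊆ S = K[x_0,…,x_n]` be a homogeneous ideal with graded quotient
`A = S/I`, let `v ∈ S_1` and `d ≥ reg(A)` such that multiplication by `v` from `A_d` to
`A_{d+1}` is bijective. (Since the Castelnuovo–Mumford regularity is characterized here by
the standard fact that bijectivity of multiplication by `v` in degree `d ≥ reg` persists in
all higher degrees, the combined hypothesis `d ≥ reg(A)` plus bijectivity in degree `d` is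
rendered as: multiplication by `v` from degree `e` to degree `e+1` is bijective for every
`e ≥ d`, expressed below by injectivity `hinj` and surjectivity `hsurj` on homogeneous
forms modulo `I`.) If `B` is a basis of `A_d`, then the image of `B` in the localization
`S/(I, v-1)` is a basis. -/
theorem basis_of_localization {K : Type*} [Field K] {m : ℕ} (d : ℕ)
    (I : Ideal (MvPolynomial (Fin m) K))
    (hIhom : ∀ p ∈ I, ∀ i : ℕ, (homogeneousComponent i) p ∈ I)
    (v : MvPolynomial (Fin m) K) (hv : v.IsHomogeneous 1)
    (hinj : ∀ e : ℕ, d ≤ e → ∀ p : MvPolynomial (Fin m) K,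
      p.IsHomogeneous e → v * p ∈ I → p ∈ I)
    (hsurj : ∀ e : ℕ, d ≤ e → ∀ q : MvPolynomial (Fin m) K, q.IsHomogeneous (e + 1) →
      ∃ p : MvPolynomial (Fin m) K, p.IsHomogeneous e ∧ q - v * p ∈ I)
    (B : Set (MvPolynomial (Fin m) K))
    (hBd : ∀ b ∈ B, (b : MvPolynomial (Fin m) K).IsHomogeneous d)
    (hBli : LinearIndependent K (fun b : B => Ideal.Quotient.mk I (b : MvPolynomial (Fin m) K)))
    (hBspan : Submodule.span K ((Ideal.Quotient.mk I) '' B)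
      = Submodule.map (Ideal.Quotient.mkₐ K I).toLinearMap
          (homogeneousSubmodule (Fin m) K d)) :
    LinearIndependent K
        (fun b : B => Ideal.Quotient.mk (I ⊔ Ideal.span {v - 1}) (b : MvPolynomial (Fin m) K)) ∧
      Submodule.span K ((Ideal.Quotient.mk (I ⊔ Ideal.span {v - 1})) '' B) = ⊤ :=
  basis_of_localization_general d I hIhom v hv hinj hsurj B hBli hBspan
end
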